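/- arXiv:math/0505445 — 2 statements merged into one kernel-verified Lean document; each statement's English description precedes it below -/
import Mathlib

section
/- If R is right small injective and right Kasch, then for k ∈ R, Rk is a minimal left ideal if and only if kR is a minimal right ideal; in particular the left socle equals the right socle. -/
/-- A right ideal `I` of `R` (viewed as a submodule of `R` over `Rᵐᵒᵖ`) is small if
`I + K ≠ R` for every proper right ideal `K`. -/
def IsSmallRightIdeal {R : Type*} [Ring R] (I : Submodule Rᵐᵒᵖ R) : Prop :=
  ∀ K : Submodule Rᵐᵒᵖ R, I ⊔ K = ⊤ → K = ⊤

/-- A right `R`-module `M` is small injective if every `R`-homomorphism from a small right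
ideal of `R` to `M` extends to a homomorphism `R → M`. -/
def SmallInjective (R : Type*) [Ring R] (M : Type*) [AddCommGroup M] [Module Rᵐᵒᵖ M] : Prop :=
  ∀ I : Submodule Rᵐᵒᵖ R, IsSmallRightIdeal I → ∀ f : I →ₗ[Rᵐᵒᵖ] M,
    ∃ g : R →ₗ[Rᵐᵒᵖ] M, ∀ x : I, g x = f x


/-- `R` is right Kasch if every simple right `R`-module embeds in `R` as a right module. -/
def RightKasch (R : Type u) [Ring R] : Prop :=
  ∀ (M : Type u) [AddCommGroup M] [Module Rᵐᵒᵖ M], IsSimpleModule Rᵐᵒᵖ M →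
    ∃ f : M →ₗ[Rᵐᵒᵖ] R, Function.Injective f

/-!
Write `r(k)` for the right annihilator of `k`, so that `kR ≅ R / r(k)` and `kR` is minimal iff
`r(k)` is a maximal right ideal. Everything rests on one extension principle: if `r(v) ⊆ r(u)`
and every homomorphism `vR → R` extends to `R`, then extending `vx ↦ ux` shows `u ∈ Rv`.

Homomorphisms from a minimal right ideal extend by small injectivity, since such an ideal is
either small or a direct summand; applied to `akR` this gives `k ∈ Rak`, so `kR` minimal implies
`Rk` minimal. Conversely, if `Rk` is minimal then either `kRk = 0`, and `kR` is small, or `k` is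
von Neumann regular, and `kR` is a direct summand. Take a maximal right ideal `M ⊇ r(k)`; the
Kasch property writes `M = r(u)`, the extension principle gives `u = ck ≠ 0`, and minimality of
`Rk` gives `k ∈ Ru`, hence `r(k) = M`.

Both socles are the additive span of the elements `k` with `Rk` (equivalently `kR`) minimal.
-/

open Submodule MulOpposite

section Lattice

variable {α : Type*} [Lattice α] [BoundedOrder α] [IsCoatomic α]

theorem IsAtom.exists_isCompl_of_sup_eq_top {a b : α} (ha : IsAtom a) (hb : b ≠ ⊤)
    (hab : a ⊔ b = ⊤) : ∃ c, IsCompl a c := by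
  obtain ⟨c, hc, hbc⟩ := (eq_top_or_exists_le_coatom b).resolve_left hb
  have hac : a ⊔ c = ⊤ := top_unique (hab ▸ sup_le_sup_left hbc a)
  refine ⟨c, ha.not_le_iff_disjoint.1 fun h => hc.1 ?_, codisjoint_iff.2 hac⟩
  rwa [sup_eq_right.2 h] at hac

end Lattice

section Module

variable {S M N : Type*} [Ring S] [AddCommGroup M] [Module S M] [AddCommGroup N] [Module S N]

theorem LinearMap.isAtom_range_iff_isCoatom_ker (f : M →ₗ[S] N) :
    IsAtom (LinearMap.range f) ↔ IsCoatom (LinearMap.ker f) := by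
  rw [← isSimpleModule_iff_isAtom, ← isSimpleModule_iff_isCoatom]
  exact ⟨fun _ => .congr f.quotKerEquivRange, fun _ => .congr f.quotKerEquivRange.symm⟩

theorem Submodule.isAtom_span_singleton_iff {k : M} :
    IsAtom (S ∙ k) ↔ k ≠ 0 ∧ ∀ a : S, a • k ≠ 0 → ∃ b : S, b • a • k = k := by
  rw [isAtom_iff_le_of_ge, Ne, span_singleton_eq_bot]
  refine and_congr_right fun _ => ⟨fun h a ha => ?_, fun h J hJ hJk => ?_⟩
  · refine mem_span_singleton.1 (h (S ∙ (a • k)) (by rwa [Ne, span_singleton_eq_bot]) ?_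
      (mem_span_singleton_self k))
    exact (span_singleton_le_iff_mem _ _).2 (smul_mem _ a (mem_span_singleton_self k))
  · obtain ⟨x, hxJ, hx0⟩ := J.ne_bot_iff.1 hJ
    obtain ⟨a, rfl⟩ := mem_span_singleton.1 (hJk hxJ)
    obtain ⟨b, hb⟩ := h a hx0
    exact (span_singleton_le_iff_mem _ _).2 (hb ▸ J.smul_mem b hxJ)

theorem Submodule.sSup_isAtom_toAddSubmonoid_le {P : AddSubmonoid M}
    (h : ∀ k : M, IsAtom (S ∙ k) → k ∈ P) :
    (sSup {I : Submodule S M | IsAtom I}).toAddSubmonoid ≤ P := by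
  rw [sSup_eq_iSup', iSup_toAddSubmonoid]
  refine iSup_le fun ⟨I, hI⟩ y hy => ?_
  by_cases hy0 : y = 0
  · exact hy0 ▸ P.zero_mem
  · refine h y ?_
    rwa [(hI.le_iff_eq (by rwa [Ne, span_singleton_eq_bot])).1
      ((span_singleton_le_iff_mem _ _).2 hy)]

theorem Submodule.mem_sSup_isAtom {k : M} (hk : IsAtom (S ∙ k)) :
    k ∈ sSup {I : Submodule S M | IsAtom I} :=
  le_sSup (α := Submodule S M) hk (mem_span_singleton_self k)

theorem Submodule.exists_extend_of_isCompl {A B : Submodule S M} (h : IsCompl A B)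
    (f : A →ₗ[S] N) : ∃ g : M →ₗ[S] N, ∀ x : A, g x = f x :=
  ⟨f ∘ₗ A.projectionOnto B h, fun x => by simp⟩

end Module

section Ring

variable {R M : Type*} [Ring R] [AddCommGroup M] [Module Rᵐᵒᵖ M]

-- provides `IsCoatomic (Submodule Rᵐᵒᵖ R)`: every proper right ideal lies in a maximal one
instance Module.Finite.mulOpposite_self : Module.Finite Rᵐᵒᵖ R :=
  .equiv (opLinearEquiv Rᵐᵒᵖ).symm

def rightAnn (k : R) : Submodule Rᵐᵒᵖ R :=
  LinearMap.ker (DistribSMul.toLinearMap Rᵐᵒᵖ R k)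

@[simp]
theorem mem_rightAnn {k x : R} : x ∈ rightAnn k ↔ k * x = 0 :=
  Iff.rfl

theorem rightAnn_eq_top_iff {k : R} : rightAnn k = ⊤ ↔ k = 0 :=
  ⟨fun h => by simpa using (eq_top_iff'.1 h) 1, fun h => by ext; simp [h]⟩

theorem rightAnn_le_rightAnn_mul (a k : R) : rightAnn k ≤ rightAnn (a * k) :=
  fun x hx => by rw [mem_rightAnn, mul_assoc, mem_rightAnn.1 hx, mul_zero]

theorem span_op_singleton_eq_range (k : R) :
    Rᵐᵒᵖ ∙ k = LinearMap.range (DistribSMul.toLinearMap Rᵐᵒᵖ R k) := by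
  ext x
  rw [mem_span_singleton, LinearMap.mem_range]
  exact ⟨fun ⟨a, ha⟩ => ⟨unop a, ha⟩, fun ⟨y, hy⟩ => ⟨op y, hy⟩⟩

theorem isAtom_span_op_singleton_iff_isCoatom_rightAnn {k : R} :
    IsAtom (Rᵐᵒᵖ ∙ k) ↔ IsCoatom (rightAnn k) := by
  rw [span_op_singleton_eq_range]
  exact LinearMap.isAtom_range_iff_isCoatom_ker _

theorem isAtom_span_singleton_iff_mul {k : R} :
    IsAtom (R ∙ k) ↔ k ≠ 0 ∧ ∀ a : R, a * k ≠ 0 → ∃ b : R, b * (a * k) = k := by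
  simp only [isAtom_span_singleton_iff, smul_eq_mul]

theorem RightKasch.exists_rightAnn_eq (hR : RightKasch R) {M : Submodule Rᵐᵒᵖ R}
    (hM : IsCoatom M) : ∃ u : R, rightAnn u = M := by
  obtain ⟨φ, hφ⟩ := hR (R ⧸ M) (isSimpleModule_iff_isCoatom.2 hM)
  refine ⟨φ (Submodule.Quotient.mk 1), ext fun x => ?_⟩
  have hx : φ (Submodule.Quotient.mk 1) * x = φ (Submodule.Quotient.mk x) := by
    rw [← op_smul_eq_mul, ← map_smul, ← Quotient.mk_smul, op_smul_eq_mul, one_mul]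
  rw [mem_rightAnn, hx, map_eq_zero_iff φ hφ, Quotient.mk_eq_zero]

theorem exists_mul_eq_of_rightAnn_le {u v : R}
    (hv : ∀ f : (Rᵐᵒᵖ ∙ v) →ₗ[Rᵐᵒᵖ] R, ∃ g : R →ₗ[Rᵐᵒᵖ] R, ∀ x : Rᵐᵒᵖ ∙ v, g x = f x)
    (h : rightAnn v ≤ rightAnn u) : ∃ c : R, c * v = u := by
  rw [span_op_singleton_eq_range] at hv
  set lv := DistribSMul.toLinearMap Rᵐᵒᵖ R v
  obtain ⟨g, hg⟩ := hv <| (LinearMap.ker lv).liftQ (DistribSMul.toLinearMap Rᵐᵒᵖ R u) h ∘ₗ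
    lv.quotKerEquivRange.symm
  have hgv : g v = u := by
    have := hg ⟨lv 1, LinearMap.mem_range_self _ _⟩
    rw [LinearMap.comp_apply, LinearEquiv.coe_coe,
      LinearMap.quotKerEquivRange_symm_apply_image] at this
    simpa [lv] using this.trans (liftQ_apply _ _ _)
  exact ⟨g 1, by rw [← op_smul_eq_mul, ← map_smul, op_smul_eq_mul, one_mul, hgv]⟩

theorem SmallInjective.exists_extend_of_isAtom (h : SmallInjective R M)
    {A : Submodule Rᵐᵒᵖ R} (hA : IsAtom A) (f : A →ₗ[Rᵐᵒᵖ] M) :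
    ∃ g : R →ₗ[Rᵐᵒᵖ] M, ∀ x : A, g x = f x := by
  by_cases hs : IsSmallRightIdeal A
  · exact h A hs f
  · simp only [IsSmallRightIdeal, not_forall] at hs
    obtain ⟨K, hK, hKtop⟩ := hs
    obtain ⟨B, hB⟩ := hA.exists_isCompl_of_sup_eq_top hKtop hK
    exact exists_extend_of_isCompl hB f

theorem exists_extend_span_of_mul_mul_eq_self {k z : R} (hk : k * z * k = k)
    (f : (Rᵐᵒᵖ ∙ k) →ₗ[Rᵐᵒᵖ] M) : ∃ g : R →ₗ[Rᵐᵒᵖ] M, ∀ x : Rᵐᵒᵖ ∙ k, g x = f x := by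
  have hmem (x : R) : k * z * x ∈ Rᵐᵒᵖ ∙ k :=
    mem_span_singleton.2 ⟨op (z * x), by rw [op_smul_eq_mul, mul_assoc]⟩
  refine ⟨f ∘ₗ (DistribSMul.toLinearMap Rᵐᵒᵖ R (k * z)).codRestrict _ hmem, fun ⟨x, hx⟩ => ?_⟩
  obtain ⟨a, rfl⟩ := mem_span_singleton.1 hx
  rw [LinearMap.comp_apply]
  refine congrArg f (Subtype.ext ?_)
  change k * z * (a • k) = a • k
  rw [smul_eq_mul_unop, ← mul_assoc, hk]

theorem isSmallRightIdeal_span_of_mul_mul_eq_zero {k : R} (hk : ∀ x, k * x * k = 0) :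
    IsSmallRightIdeal (Rᵐᵒᵖ ∙ k) := by
  intro K hK
  obtain ⟨y, hy, n, hn, hyn⟩ := mem_sup.1 (hK ▸ mem_top : (1 : R) ∈ (Rᵐᵒᵖ ∙ k) ⊔ K)
  obtain ⟨a, rfl⟩ := mem_span_singleton.1 hy
  rw [smul_eq_mul_unop] at hyn
  -- `n = 1 - k a` is a unit with inverse `1 + k a`, because `(k a)² = 0`
  have hunit : n * (1 + k * unop a) = 1 := by
    rw [eq_sub_of_add_eq' hyn, sub_mul, one_mul, mul_add, mul_one, ← mul_assoc, hk, zero_mul,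
      add_zero, add_sub_cancel_right]
  refine eq_top_iff'.2 fun x => ?_
  simpa [op_smul_eq_mul, hunit] using K.smul_mem (op x) (K.smul_mem (op (1 + k * unop a)) hn)

theorem exists_mul_mul_eq_self_of_isAtom_span {k x : R} (hk : IsAtom (R ∙ k))
    (hx : k * x * k ≠ 0) : ∃ z, k * z * k = k := by
  obtain ⟨-, hmin⟩ := isAtom_span_singleton_iff_mul.1 hk
  obtain ⟨y, hy⟩ := hmin (k * x) hx
  -- right multiplication by `x * k` is an endomorphism of the simple module `R k`, hence injective
  have hinj (a : R) (ha : a * k * (x * k) = 0) : a * k = 0 := by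
    by_contra hak
    obtain ⟨b, hb⟩ := hmin a hak
    exact hx (calc k * x * k = b * (a * k * (x * k)) := by rw [← mul_assoc b, hb, mul_assoc]
      _ = 0 := by rw [ha, mul_zero])
  refine ⟨x * y, ?_⟩
  have := hinj (k * x * y - 1) (by
    simp only [sub_mul, one_mul, mul_assoc] at hy ⊢
    rw [hy, sub_self])
  rwa [sub_mul, one_mul, sub_eq_zero, mul_assoc k] at this

theorem SmallInjective.exists_extend_span_of_isAtom_span (h : SmallInjective R R) {k : R}
    (hk : IsAtom (R ∙ k)) (f : (Rᵐᵒᵖ ∙ k) →ₗ[Rᵐᵒᵖ] R) :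
    ∃ g : R →ₗ[Rᵐᵒᵖ] R, ∀ x : Rᵐᵒᵖ ∙ k, g x = f x := by
  by_cases hkRk : ∃ x, k * x * k ≠ 0
  · obtain ⟨x, hx⟩ := hkRk
    obtain ⟨z, hz⟩ := exists_mul_mul_eq_self_of_isAtom_span hk hx
    exact exists_extend_span_of_mul_mul_eq_self hz f
  · push Not at hkRk
    exact h _ (isSmallRightIdeal_span_of_mul_mul_eq_zero hkRk) f

theorem SmallInjective.isAtom_span_of_isAtom_span_op (h : SmallInjective R R) {k : R}
    (hk : IsAtom (Rᵐᵒᵖ ∙ k)) : IsAtom (R ∙ k) := by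
  rw [isAtom_span_op_singleton_iff_isCoatom_rightAnn] at hk
  refine isAtom_span_singleton_iff_mul.2 ⟨fun hk0 => hk.1 (rightAnn_eq_top_iff.2 hk0),
    fun a ha => ?_⟩
  have hak : rightAnn (a * k) = rightAnn k :=
    (hk.le_iff_eq (mt rightAnn_eq_top_iff.1 ha)).1 (rightAnn_le_rightAnn_mul a k)
  have hak' : IsAtom (Rᵐᵒᵖ ∙ (a * k)) := by
    rwa [isAtom_span_op_singleton_iff_isCoatom_rightAnn, hak]
  exact exists_mul_eq_of_rightAnn_le (h.exists_extend_of_isAtom hak') hak.le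

theorem SmallInjective.isAtom_span_op_of_isAtom_span (h : SmallInjective R R)
    (hR : RightKasch R) {k : R} (hk : IsAtom (R ∙ k)) : IsAtom (Rᵐᵒᵖ ∙ k) := by
  obtain ⟨hk0, hmin⟩ := isAtom_span_singleton_iff_mul.1 hk
  obtain ⟨M, hM, hkM⟩ :=
    (eq_top_or_exists_le_coatom (rightAnn k)).resolve_left (mt rightAnn_eq_top_iff.1 hk0)
  obtain ⟨u, rfl⟩ := hR.exists_rightAnn_eq hM
  obtain ⟨c, rfl⟩ := exists_mul_eq_of_rightAnn_le (h.exists_extend_span_of_isAtom_span hk) hkM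
  obtain ⟨d, hd⟩ := hmin c (mt rightAnn_eq_top_iff.2 hM.1)
  have hck : rightAnn (c * k) ≤ rightAnn k := by
    simpa only [hd] using rightAnn_le_rightAnn_mul d (c * k)
  rw [isAtom_span_op_singleton_iff_isCoatom_rightAnn]
  exact le_antisymm hck hkM ▸ hM

end Ring

/-- If `R` is right small injective and right Kasch, then for `k ∈ R` the left ideal `Rk`
is minimal iff the right ideal `kR` is minimal; in particular the left socle (the sum of
all minimal left ideals) coincides with the right socle (the sum of all minimal right
ideals). -/
theorem stmt_11 {R : Type u} [Ring R] (h : SmallInjective R R) (hk : RightKasch R) :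
    (∀ k : R, IsAtom (Submodule.span R ({k} : Set R)) ↔
      IsAtom (Submodule.span Rᵐᵒᵖ ({k} : Set R))) ∧
    ((sSup {I : Submodule R R | IsAtom I} : Submodule R R) : Set R) =
      ((sSup {I : Submodule Rᵐᵒᵖ R | IsAtom I} : Submodule Rᵐᵒᵖ R) : Set R) := by
  have hiff (k : R) : IsAtom (R ∙ k) ↔ IsAtom (Rᵐᵒᵖ ∙ k) :=
    ⟨h.isAtom_span_op_of_isAtom_span hk, h.isAtom_span_of_isAtom_span_op⟩
  refine ⟨hiff, congrArg SetLike.coe (le_antisymm ?_ ?_ :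
    (sSup {I : Submodule R R | IsAtom I}).toAddSubmonoid =
      (sSup {I : Submodule Rᵐᵒᵖ R | IsAtom I}).toAddSubmonoid)⟩
  · exact sSup_isAtom_toAddSubmonoid_le fun k hk' => mem_sSup_isAtom ((hiff k).1 hk')
  · exact sSup_isAtom_toAddSubmonoid_le fun k hk' => mem_sSup_isAtom ((hiff k).2 hk')
end

section
/- A semilocal ring R is right self-injective if and only if it is right small injective. -/
/-!
Write `J` for the Jacobson radical. For a right ideal `T`, a complement of the image of `T` in the
semisimple ring `R/J`, pulled back to `R`, is a right ideal `K` with `T + K = R` and `T ∩ K ⊆ J`.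
As `J` is small, so is `T ∩ K`; hence for `f : T → M` the restriction of `f` to `T ∩ K` extends to
some `g₀ : R → M`. Now `f - g₀` vanishes on `T ∩ K`, so `t + k ↦ (f - g₀) t` is a well-defined
extension of it to `T + K = R`, and Baer's criterion applies.
-/

open MulOpposite

theorem Module.Baer.of_linearEquiv_of_extends {S N Q : Type*} [Ring S] [AddCommGroup N]
    [Module S N] [AddCommGroup Q] [Module S Q] (e : N ≃ₗ[S] S)
    (h : ∀ (T : Submodule S N) (f : T →ₗ[S] Q), ∃ g : N →ₗ[S] Q, ∀ x : T, g x = f x) :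
    Module.Baer S Q := by
  intro I g
  obtain ⟨g', hg'⟩ := h (Submodule.map (e.symm : S →ₗ[S] N) I)
    (g ∘ₗ (e.symm.submoduleMap I).symm.toLinearMap)
  refine ⟨g' ∘ₗ e.symm.toLinearMap, fun x hx => ?_⟩
  have : (e.symm.submoduleMap I).symm ⟨e.symm x, Submodule.mem_map_of_mem hx⟩ = ⟨x, hx⟩ :=
    Subtype.ext (by simp)
  simpa [this] using hg' ⟨e.symm x, Submodule.mem_map_of_mem hx⟩

theorem LinearMap.exists_extend_of_sup_eq_top {S N M : Type*} [Ring S] [AddCommGroup N]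
    [Module S N] [AddCommGroup M] [Module S M] {T K : Submodule S N} (hTK : T ⊔ K = ⊤)
    (f : T →ₗ[S] M) (hf : ∀ x : T, (x : N) ∈ K → f x = 0) :
    ∃ g : N →ₗ[S] M, ∀ x : T, g x = f x := by
  let p := K.mkQ ∘ₗ T.subtype
  have hp : Function.Surjective p := by
    rw [← range_eq_top, range_comp, Submodule.range_subtype, Submodule.map_mkQ_eq_top,
      sup_comm, hTK]
  have hker : ker p ≤ ker f := fun x hx => hf x (by simpa [p] using hx)
  let e := p.quotKerEquivOfSurjective hp
  refine ⟨(ker p).liftQ f hker ∘ₗ e.symm.toLinearMap ∘ₗ K.mkQ, fun x => ?_⟩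
  have : e.symm (Submodule.Quotient.mk (x : N)) = Submodule.Quotient.mk x := by
    rw [LinearEquiv.symm_apply_eq, quotKerEquivOfSurjective_apply_mk]; rfl
  simp [this]

theorem Submodule.exists_sup_eq_top_and_inf_le_ker {S S₂ M N : Type*} [Ring S] [Ring S₂]
    [AddCommGroup M] [Module S M] [AddCommGroup N] [Module S₂ N]
    [ComplementedLattice (Submodule S₂ N)] {σ : S →+* S₂} [RingHomSurjective σ]
    {f : M →ₛₗ[σ] N} (hf : Function.Surjective f) (p : Submodule S M) :
    ∃ q : Submodule S M, p ⊔ q = ⊤ ∧ p ⊓ q ≤ LinearMap.ker f := by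
  obtain ⟨q', hq'⟩ := ComplementedLattice.exists_isCompl (Submodule.map f p)
  refine ⟨q'.comap f, ?_, ?_⟩
  · have hker : LinearMap.ker f ≤ q'.comap f := comap_mono bot_le
    rw [← sup_eq_left.2 (hker.trans le_sup_right), ← comap_map_eq, map_sup,
      map_comap_eq_of_surjective hf, hq'.sup_eq_top, comap_top]
  · rw [LinearMap.ker, ← map_le_iff_le_comap]
    exact (map_inf_le f).trans (by rw [map_comap_eq_of_surjective hf, hq'.inf_eq_bot])

section Jacobson

variable {R : Type*} [Ring R]

def Ideal.toRightIdeal (I : Ideal R) [I.IsTwoSided] : Submodule Rᵐᵒᵖ R where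
  carrier := I
  add_mem' := I.add_mem
  zero_mem' := I.zero_mem
  smul_mem' c _ hx := I.mul_mem_right c.unop hx

@[simp]
theorem Ideal.mem_toRightIdeal {I : Ideal R} [I.IsTwoSided] {x : R} :
    x ∈ I.toRightIdeal ↔ x ∈ I :=
  Iff.rfl

theorem Ring.isUnit_one_add_of_mem_jacobson {j : R} (hj : j ∈ Ring.jacobson R) :
    IsUnit (1 + j) := by
  have left_inv : ∀ x ∈ Ring.jacobson R, ∃ z, z * (1 + x) = 1 := by
    intro x hx
    obtain ⟨z, hz⟩ := (Ideal.mem_jacobson_iff (I := ⊥)).1 (by rwa [Ideal.jacobson_bot]) (1 : R)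
    refine ⟨z, ?_⟩
    rw [Submodule.mem_bot, sub_eq_zero, mul_one] at hz
    rw [mul_add, mul_one, add_comm, hz]
  obtain ⟨z, hz⟩ := left_inv j hj
  -- `z = 1 - z * j` has a left inverse too, which must then equal its right inverse `1 + j`
  have hz' : z = 1 + -(z * j) := by rw [← hz]; noncomm_ring
  obtain ⟨w, hw⟩ := left_inv _ (neg_mem ((Ring.jacobson R).mul_mem_left z hj))
  rw [← hz'] at hw
  have hw' : w = 1 + j := left_inv_eq_right_inv hw hz
  exact ⟨⟨1 + j, z, hw' ▸ hw, hz⟩, rfl⟩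

theorem Submodule.eq_top_of_isUnit_mem {K : Submodule Rᵐᵒᵖ R} {u : R} (hu : IsUnit u)
    (huK : u ∈ K) : K = ⊤ := by
  obtain ⟨u, rfl⟩ := hu
  refine eq_top_iff'.2 fun x => ?_
  simpa [← mul_assoc] using K.smul_mem (op (↑u⁻¹ * x)) huK

theorem IsSmallRightIdeal.mono {I I' : Submodule Rᵐᵒᵖ R} (hI : IsSmallRightIdeal I)
    (h : I' ≤ I) : IsSmallRightIdeal I' :=
  fun K hK => hI K (top_unique (hK ▸ sup_le_sup_right h K))

theorem isSmallRightIdeal_jacobson : IsSmallRightIdeal (Ring.jacobson R).toRightIdeal := by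
  intro K hK
  obtain ⟨j, hj, k, hk, hjk⟩ := Submodule.mem_sup.1 (hK ▸ Submodule.mem_top (x := (1 : R)))
  have : k = 1 + -j := by rw [← hjk]; abel
  exact Submodule.eq_top_of_isUnit_mem
    (this ▸ Ring.isUnit_one_add_of_mem_jacobson (neg_mem hj)) hk

theorem Ideal.isSemisimpleRing_quotient {I : Ideal R} [I.IsTwoSided]
    (h : IsSemisimpleModule R (R ⧸ I)) : IsSemisimpleRing (R ⧸ I) :=
  let l : (R ⧸ I) →ₛₗ[Ideal.Quotient.mk I] (R ⧸ I) :=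
    { AddMonoidHom.id _ with map_smul' := fun _ _ => rfl }
  (l.isSemisimpleModule_iff_of_bijective Function.bijective_id).1 h

theorem exists_sup_eq_top_and_inf_le_jacobson
    (hsl : IsSemisimpleModule R (R ⧸ Ring.jacobson R)) (T : Submodule Rᵐᵒᵖ R) :
    ∃ K : Submodule Rᵐᵒᵖ R, T ⊔ K = ⊤ ∧ T ⊓ K ≤ (Ring.jacobson R).toRightIdeal := by
  have := Ideal.isSemisimpleRing_quotient hsl
  let σ : Rᵐᵒᵖ →+* (R ⧸ Ring.jacobson R)ᵐᵒᵖ := RingHom.op (Ideal.Quotient.mk _)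
  have : RingHomSurjective σ := ⟨fun y =>
    let ⟨x, hx⟩ := Ideal.Quotient.mk_surjective y.unop; ⟨op x, congrArg op hx⟩⟩
  let π : R →ₛₗ[σ] R ⧸ Ring.jacobson R :=
    { toFun := Ideal.Quotient.mk _
      map_add' := map_add _
      map_smul' := fun c x => map_mul _ x c.unop }
  obtain ⟨K, hsup, hinf⟩ :=
    Submodule.exists_sup_eq_top_and_inf_le_ker (f := π) Ideal.Quotient.mk_surjective T
  exact ⟨K, hsup, hinf.trans fun x hx => Ideal.Quotient.eq_zero_iff_mem.1 hx⟩

end Jacobson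

section SmallInjective

universe u

variable {R : Type u} [Ring R]

theorem Module.Injective.smallInjective {M : Type u} [AddCommGroup M] [Module Rᵐᵒᵖ M]
    [Module.Injective Rᵐᵒᵖ M] : SmallInjective R M :=
  fun I _ f => Module.Injective.out I.subtype I.injective_subtype f

theorem SmallInjective.injective {M : Type*} [AddCommGroup M] [Module Rᵐᵒᵖ M]
    (hsl : IsSemisimpleModule R (R ⧸ Ring.jacobson R))
    (hM : SmallInjective R M) : Module.Injective Rᵐᵒᵖ M := by
  refine Module.Baer.injective <|
    Module.Baer.of_linearEquiv_of_extends (MulOpposite.opLinearEquiv Rᵐᵒᵖ) fun T f => ?_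
  obtain ⟨K, hsup, hinf⟩ := exists_sup_eq_top_and_inf_le_jacobson hsl T
  obtain ⟨g₀, hg₀⟩ := hM (T ⊓ K) (isSmallRightIdeal_jacobson.mono hinf)
    (f ∘ₗ Submodule.inclusion inf_le_left)
  obtain ⟨h, hh⟩ := LinearMap.exists_extend_of_sup_eq_top hsup (f - g₀ ∘ₗ T.subtype)
    fun x hx => sub_eq_zero.2 (hg₀ ⟨x, x.2, hx⟩).symm
  exact ⟨g₀ + h, fun x => by simp [hh]⟩

theorem injective_iff_smallInjective {M : Type u} [AddCommGroup M] [Module Rᵐᵒᵖ M]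
    (hsl : IsSemisimpleModule R (R ⧸ Ring.jacobson R)) :
    Module.Injective Rᵐᵒᵖ M ↔ SmallInjective R M :=
  ⟨fun _ => Module.Injective.smallInjective, SmallInjective.injective hsl⟩

end SmallInjective

/-- A semilocal ring (`R/J(R)` semisimple) is right self-injective iff it is right small
injective. -/
theorem stmt_13 {R : Type*} [Ring R]
    (hsl : IsSemisimpleModule R (R ⧸ (⊥ : Ideal R).jacobson)) :
    Module.Injective Rᵐᵒᵖ R ↔ SmallInjective R R := by
  rw [Ideal.jacobson_bot] at hsl
  exact injective_iff_smallInjective hsl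
end
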